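/- arXiv:1802.04318 — 3 statements merged into one kernel-verified Lean document; each statement's English description precedes it below -/
import Mathlib

section
/- Let G₁,…,G_n be rooted graphs with adjacency matrices A¹,…,Aⁿ and roots o₁,…,o_n. Let Iᵏ denote the identity on ℓ²(V_k) and Pᵏ the orthogonal projection onto the span of δ_{o_k}. Then the adjacency matrix B of the iterated comb product G₁ ▷ G₂ ▷ ⋯ ▷ G_n, acting on ℓ²(V₁×⋯×V_n) ≅ ℓ²(V₁)⊗⋯⊗ℓ²(V_n), equals B = Σ_{j=1}^n I¹ ⊗ ⋯ ⊗ I^{j−1} ⊗ Aʲ ⊗ P^{j+1} ⊗ ⋯ ⊗ Pⁿ. -/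
open scoped Classical

/-- The adjacency kernel of the iterated (left-associated) comb product
`G₁ ▷ G₂ ▷ ⋯ ▷ G_n`, on the vertex set `V₁ × ⋯ × V_n` identified with the
dependent product `∀ k, V k`.  For `n + 1` graphs it is the comb product of
the adjacency of the first `n` graphs with the last one:
`A³_{(x,y)(x',y')} = A_{xx'} δ_{y,o} δ_{y',o} + δ_{x,x'} Aⁿ⁺¹_{yy'}`. -/
noncomputable def combIterAdj :
    ∀ (n : ℕ) (V : Fin n → Type) (A : ∀ k, V k → V k → ℝ) (o : ∀ k, V k),
      (∀ k, V k) → (∀ k, V k) → ℝ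
  | 0, _, _, _, _, _ => 0
  | n + 1, V, A, o, v, w =>
      combIterAdj n (fun k => V k.castSucc) (fun k => A k.castSucc)
          (fun k => o k.castSucc) (fun k => v k.castSucc) (fun k => w k.castSucc) *
        (if v (Fin.last n) = o (Fin.last n) then 1 else 0) *
        (if w (Fin.last n) = o (Fin.last n) then 1 else 0) +
      (if (fun k : Fin n => v k.castSucc) = (fun k : Fin n => w k.castSucc) then 1 else 0) *
        A (Fin.last n) (v (Fin.last n)) (w (Fin.last n))

private lemma prod_ite_one_zero {n : ℕ} (p : Fin n → Prop) [DecidablePred p] :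
    (∏ k, if p k then (1 : ℝ) else 0) = if ∀ k, p k then 1 else 0 := by
  by_cases h : ∀ k, p k
  · simp [h]
  · push_neg at h
    obtain ⟨k, hk⟩ := h
    rw [if_neg (by push_neg; exact ⟨k, hk⟩)]
    exact Finset.prod_eq_zero (Finset.mem_univ k) (if_neg hk)

private lemma combIterAdj_aux :
    ∀ (n : ℕ) (V : Fin n → Type) (A : ∀ k, V k → V k → ℝ) (o : ∀ k, V k)
      (v w : ∀ k, V k),
      combIterAdj n V A o v w =
        ∑ j : Fin n,
          (∏ k, if k < j then (if v k = w k then (1 : ℝ) else 0) else 1) *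
            A j (v j) (w j) *
          (∏ k, if j < k then
              (if v k = o k then (1 : ℝ) else 0) * (if w k = o k then 1 else 0)
            else 1) := by
  intro n
  induction n with
  | zero => intro V A o v w; simp [combIterAdj]
  | succ n ih =>
    intro V A o v w
    rw [combIterAdj, ih]
    rw [Fin.sum_univ_castSucc]
    rw [Finset.sum_mul, Finset.sum_mul]
    congr 1
    · apply Finset.sum_congr rfl
      intro i _
      rw [Fin.prod_univ_castSucc, Fin.prod_univ_castSucc]
      simp only [Fin.castSucc_lt_castSucc_iff, Fin.castSucc_lt_last, if_true]
      have h1 : ¬ (Fin.last n < Fin.castSucc i) := (Fin.castSucc_lt_last i).asymm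
      rw [if_neg h1]
      ring
    · rw [Fin.prod_univ_castSucc]
      simp only [Fin.castSucc_lt_last, lt_self_iff_false, if_true, if_false]
      have h2 : ∀ k : Fin (n+1), ¬ (Fin.last n < k) := fun k => (Fin.le_last k).not_gt
      rw [Finset.prod_congr rfl (fun k _ => if_neg (h2 k)), Finset.prod_const_one]
      have h3 : (if (fun k : Fin n => v k.castSucc) = (fun k : Fin n => w k.castSucc)
          then (1:ℝ) else 0)
          = ∏ k : Fin n, if v k.castSucc = w k.castSucc then (1:ℝ) else 0 := by
        rw [prod_ite_one_zero (fun k : Fin n => v k.castSucc = w k.castSucc)]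
        congr 1
        simp [funext_iff]
      rw [h3]
      ring

/-- The adjacency matrix `B` of the iterated comb product `G₁ ▷ ⋯ ▷ G_n`
equals `Σ_{j=1}^n I¹ ⊗ ⋯ ⊗ I^{j-1} ⊗ Aʲ ⊗ P^{j+1} ⊗ ⋯ ⊗ Pⁿ`, where `Iᵏ` is
the identity (kernel `δ_{v_k w_k}`) and `Pᵏ` the projection onto `δ_{o_k}`
(kernel `δ_{v_k o_k} δ_{w_k o_k}`), written at the level of kernels on
`ℓ²(V₁ × ⋯ × V_n) ≅ ℓ²(V₁) ⊗ ⋯ ⊗ ℓ²(V_n)`. -/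
theorem combIterAdj_eq_sum_tensor (n : ℕ) (V : Fin n → Type)
    (A : ∀ k, V k → V k → ℝ) (o : ∀ k, V k)
    (hsym : ∀ k x x', A k x x' = A k x' x)
    (hval : ∀ k x x', A k x x' = 0 ∨ A k x x' = 1)
    (hdiag : ∀ k x, A k x x = 0)
    (hdeg : ∀ k, ∃ D : ℕ, ∀ x : V k, {y : V k | A k x y = 1}.Finite ∧
      {y : V k | A k x y = 1}.ncard ≤ D) :
    ∀ v w : ∀ k, V k,
      combIterAdj n V A o v w =
        ∑ j : Fin n,
          (∏ k ∈ Finset.univ.filter (fun k => k < j),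
              if v k = w k then (1 : ℝ) else 0) *
            A j (v j) (w j) *
          (∏ k ∈ Finset.univ.filter (fun k => j < k),
              (if v k = o k then (1 : ℝ) else 0) *
                (if w k = o k then 1 else 0)) := by
  intro v w
  rw [combIterAdj_aux]
  apply Finset.sum_congr rfl
  intro j _
  rw [Finset.prod_filter, Finset.prod_filter]
end

section
/- Any spidernet with data (2n, n+1+u, n), n ∈ ℕ, u ∈ ℕ₀, satisfies u ≤ 2n−1, and conversely for each n ∈ ℕ and u ∈ {0,…,2n−1} there exists a spidernet with data (2n, n+1+u, n). -/
/-- The neighbors of `x` at distance `d(o,x) + ε` from the root, for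
`ε = +1, 0, -1` respectively. -/
def omegaPlus {V : Type*} (G : SimpleGraph V) (o x : V) : Set V :=
  {y | G.Adj x y ∧ G.dist o y = G.dist o x + 1}

def omegaZero {V : Type*} (G : SimpleGraph V) (o x : V) : Set V :=
  {y | G.Adj x y ∧ G.dist o y = G.dist o x}

def omegaMinus {V : Type*} (G : SimpleGraph V) (o x : V) : Set V :=
  {y | G.Adj x y ∧ G.dist o y + 1 = G.dist o x}

/-- A spidernet with data `(a, b, c)`: a connected rooted graph with
`ω₊(o) = a`, `ω₋(o) = ω₀(o) = 0`, and `ω₊(x) = c`, `ω₋(x) = 1`,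
`ω₀(x) = b - 1 - c` for all `x ≠ o`; here `a ∈ ℕ`, `b ∈ ℕ \ {1}`, `c ∈ ℕ`,
`c ≤ b - 1`. -/
def IsSpidernet {V : Type*} (G : SimpleGraph V) (o : V) (a b c : ℕ) : Prop :=
  G.Connected ∧ 1 ≤ a ∧ 2 ≤ b ∧ 1 ≤ c ∧ c ≤ b - 1 ∧
  ((omegaPlus G o o).Finite ∧ (omegaPlus G o o).ncard = a) ∧
  omegaMinus G o o = ∅ ∧ omegaZero G o o = ∅ ∧
  ∀ x : V, x ≠ o →
    ((omegaPlus G o x).Finite ∧ (omegaPlus G o x).ncard = c) ∧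
    ((omegaMinus G o x).Finite ∧ (omegaMinus G o x).ncard = 1) ∧
    ((omegaZero G o x).Finite ∧ (omegaZero G o x).ncard = b - 1 - c)

namespace SpiderP

/-- size of the sphere at distance `k+1` from the root -/
def sz (n k : ℕ) : ℕ := 2 * n * n ^ k

lemma sz_pos {n : ℕ} (hn : 1 ≤ n) (k : ℕ) : 0 < sz n k :=
  Nat.mul_pos (Nat.mul_pos (by norm_num) hn) (pow_pos hn k)

lemma sz_zero (n : ℕ) : sz n 0 = 2 * n := by simp [sz]

lemma sz_succ (n k : ℕ) : sz n (k + 1) = sz n k * n := by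
  simp [sz, pow_succ]; ring

lemma sz_even (n k : ℕ) : sz n k % 2 = 0 := by
  have : sz n k = 2 * (n * n ^ k) := by simp [sz]; ring
  omega

lemma two_n_le_sz {n : ℕ} (hn : 1 ≤ n) (k : ℕ) : 2 * n ≤ sz n k := by
  have h1 : 1 ≤ n ^ k := Nat.one_le_pow _ _ hn
  calc 2 * n = 2 * n * 1 := by ring
    _ ≤ 2 * n * n ^ k := Nat.mul_le_mul_left _ h1

/-- the set of within-sphere difference offsets -/
def D (u mm : ℕ) : Finset ℕ :=
  (Finset.Icc 1 (u / 2) ∪ (Finset.Icc 1 (u / 2)).image (fun e => mm - e)) ∪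
    (if u % 2 = 1 then {mm / 2} else ∅)

lemma mem_D {u mm d : ℕ} :
    d ∈ D u mm ↔ (1 ≤ d ∧ d ≤ u / 2) ∨ (∃ e, 1 ≤ e ∧ e ≤ u / 2 ∧ mm - e = d) ∨
      (u % 2 = 1 ∧ d = mm / 2) := by
  by_cases hp : u % 2 = 1 <;>
    simp [D, hp, Finset.mem_union, Finset.mem_image, Finset.mem_Icc, or_assoc, and_assoc] <;> exact or_comm.trans or_assoc

lemma D_bounds {u mm d : ℕ} (hum : u < mm) (hme : mm % 2 = 0) (hd : d ∈ D u mm) :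
    0 < d ∧ d < mm := by
  rw [mem_D] at hd
  rcases hd with ⟨h1, h2⟩ | ⟨e, he1, he2, rfl⟩ | ⟨hp, rfl⟩ <;> omega

lemma D_symm {u mm d : ℕ} (hum : u < mm) (hme : mm % 2 = 0) (hd : d ∈ D u mm) :
    mm - d ∈ D u mm := by
  rw [mem_D] at hd ⊢
  rcases hd with ⟨h1, h2⟩ | ⟨e, he1, he2, rfl⟩ | ⟨hp, rfl⟩
  · exact Or.inr (Or.inl ⟨d, h1, h2, rfl⟩)
  · exact Or.inl (by omega)
  · exact Or.inr (Or.inr ⟨hp, by omega⟩)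

lemma D_card {u mm : ℕ} (hum : u < mm) (hme : mm % 2 = 0) : (D u mm).card = u := by
  have h1 : (Finset.Icc 1 (u / 2)).card = u / 2 := by simp
  have hinj : Set.InjOn (fun e => mm - e) (Finset.Icc 1 (u / 2)) := by
    intro a ha b hb hab
    simp only [Finset.coe_Icc, Set.mem_Icc] at ha hb
    simp only at hab
    omega
  have h2 : ((Finset.Icc 1 (u / 2)).image (fun e => mm - e)).card = u / 2 := by
    rw [Finset.card_image_of_injOn hinj, h1]
  have hd1 : Disjoint (Finset.Icc 1 (u / 2)) ((Finset.Icc 1 (u / 2)).image (fun e => mm - e)) := by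
    rw [Finset.disjoint_left]
    intro a ha hb
    simp only [Finset.mem_Icc] at ha
    simp only [Finset.mem_image, Finset.mem_Icc] at hb
    obtain ⟨e, he, heq⟩ := hb
    omega
  have hcu : (Finset.Icc 1 (u / 2) ∪ (Finset.Icc 1 (u / 2)).image (fun e => mm - e)).card
      = u / 2 + u / 2 := by
    rw [Finset.card_union_of_disjoint hd1, h1, h2]
  by_cases hp : u % 2 = 1
  · have hd2 : Disjoint (Finset.Icc 1 (u / 2) ∪ (Finset.Icc 1 (u / 2)).image (fun e => mm - e))
        ({mm / 2} : Finset ℕ) := by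
      rw [Finset.disjoint_right]
      intro a ha hb
      simp only [Finset.mem_singleton] at ha
      simp only [Finset.mem_union, Finset.mem_Icc, Finset.mem_image] at hb
      rcases hb with h | ⟨e, he, heq⟩ <;> omega
    rw [D, if_pos hp, Finset.card_union_of_disjoint hd2, hcu]
    simp; omega
  · rw [D, if_neg hp, Finset.union_empty, hcu]; omega

lemma mod_symm {m a b d : ℕ} (ha : a < m) (hd : d < m) (hb : b = (a + d) % m) :
    a = (b + (m - d)) % m := by
  subst hb
  rw [Nat.mod_add_mod]
  have h : a + d + (m - d) = a + m := by omega
  rw [h, Nat.add_mod_right, Nat.mod_eq_of_lt ha]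

lemma mod_inj {m a d₁ d₂ : ℕ} (h1 : d₁ < m) (h2 : d₂ < m)
    (h : (a + d₁) % m = (a + d₂) % m) : d₁ = d₂ := by
  have h3 : d₁ ≡ d₂ [MOD m] := Nat.ModEq.add_left_cancel' a h
  rwa [Nat.ModEq, Nat.mod_eq_of_lt h1, Nat.mod_eq_of_lt h2] at h3

lemma mod_ne {m a d : ℕ} (ha : a < m) (hd0 : 0 < d) (hdm : d < m) : a ≠ (a + d) % m := by
  intro h
  have h2 : (a + 0) % m = (a + d) % m := by
    rw [Nat.add_zero, Nat.mod_eq_of_lt ha]; exact h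
  have := mod_inj (m := m) (a := a) (by omega) hdm h2
  omega


abbrev Vtx (n : ℕ) : Type := Option {p : ℕ × ℕ // p.2 < sz n p.1}

def lvl {n : ℕ} : Vtx n → ℕ
  | none => 0
  | some p => p.1.1 + 1

def Adj (n u : ℕ) : Vtx n → Vtx n → Prop
  | none, none => False
  | none, some p => p.1.1 = 0
  | some p, none => p.1.1 = 0
  | some p, some q =>
      (q.1.1 = p.1.1 ∧ ∃ d ∈ D u (sz n p.1.1), q.1.2 = (p.1.2 + d) % sz n p.1.1) ∨
      (q.1.1 = p.1.1 + 1 ∧ q.1.2 / n = p.1.2) ∨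
      (p.1.1 = q.1.1 + 1 ∧ p.1.2 / n = q.1.2)

lemma adj_none_none {n u : ℕ} : Adj n u none none ↔ False := Iff.rfl
lemma adj_none_some {n u : ℕ} (p) : Adj n u none (some p) ↔ p.1.1 = 0 := Iff.rfl
lemma adj_some_none {n u : ℕ} (p) : Adj n u (some p) none ↔ p.1.1 = 0 := Iff.rfl
lemma adj_some_some {n u : ℕ} (p q) : Adj n u (some p) (some q) ↔
      (q.1.1 = p.1.1 ∧ ∃ d ∈ D u (sz n p.1.1), q.1.2 = (p.1.2 + d) % sz n p.1.1) ∨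
      (q.1.1 = p.1.1 + 1 ∧ q.1.2 / n = p.1.2) ∨
      (p.1.1 = q.1.1 + 1 ∧ p.1.2 / n = q.1.2) := Iff.rfl

lemma u_lt_sz {n u : ℕ} (hn : 1 ≤ n) (hu : u < 2 * n) (k : ℕ) : u < sz n k :=
  lt_of_lt_of_le hu (two_n_le_sz hn k)

def G (n u : ℕ) (hn : 1 ≤ n) (hu : u < 2 * n) : SimpleGraph (Vtx n) where
  Adj := Adj n u
  symm := by
    constructor
    rintro (_ | ⟨⟨⟨k, i⟩, hik⟩⟩) (_ | ⟨⟨⟨l, j⟩, hjl⟩⟩) h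
    · exact h
    · exact h
    · exact h
    · rw [adj_some_some] at h ⊢
      simp only at h ⊢
      rcases h with ⟨hkl, d, hd, hq⟩ | ⟨hkl, hdiv⟩ | ⟨hkl, hdiv⟩
      · subst hkl
        refine Or.inl ⟨rfl, sz n l - d, D_symm (u_lt_sz hn hu l) (sz_even n l) hd, ?_⟩
        exact mod_symm hik (D_bounds (u_lt_sz hn hu l) (sz_even n l) hd).2 hq
      · exact Or.inr (Or.inr ⟨hkl, hdiv⟩)
      · exact Or.inr (Or.inl ⟨hkl, hdiv⟩)
  loopless := by
    constructor
    rintro (_ | ⟨⟨⟨k, i⟩, hik⟩⟩) h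
    · exact h
    · rw [adj_some_some] at h
      simp only at h
      rcases h with ⟨-, d, hd, hq⟩ | ⟨hkl, -⟩ | ⟨hkl, -⟩
      · obtain ⟨hd0, hdm⟩ := D_bounds (u_lt_sz hn hu k) (sz_even n k) hd
        exact mod_ne hik hd0 hdm hq
      · omega
      · omega

lemma G_adj {n u : ℕ} {hn : 1 ≤ n} {hu : u < 2 * n} {x y : Vtx n} : (G n u hn hu).Adj x y ↔ Adj n u x y := Iff.rfl

lemma adj_lvl {n u : ℕ} {x y : Vtx n} (h : Adj n u x y) : lvl y ≤ lvl x + 1 := by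
  match x, y with
  | none, none => exact h.elim
  | none, some p => rw [adj_none_some] at h; simp [lvl, h]
  | some p, none => exact Nat.zero_le _
  | some p, some q =>
    rw [adj_some_some] at h
    rcases h with ⟨hkl, -⟩ | ⟨hkl, -⟩ | ⟨hkl, -⟩ <;> simp [lvl] <;> omega

lemma walk_lvl {n u : ℕ} {hn : 1 ≤ n} {hu : u < 2 * n} {x y : Vtx n} (w : (G n u hn hu).Walk x y) : lvl y ≤ lvl x + w.length := by
  induction w with
  | nil => simp
  | cons h w ih =>
    have h2 := adj_lvl (n := n) (u := u) h
    rw [SimpleGraph.Walk.length_cons]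
    omega

def toRoot (n u : ℕ) (hn : 1 ≤ n) (hu : u < 2 * n) :
    (k : ℕ) → (i : ℕ) → (h : i < sz n k) → (G n u hn hu).Walk none (some ⟨(k, i), h⟩)
  | 0, i, h => SimpleGraph.Walk.cons (by rw [G_adj, adj_none_some]) SimpleGraph.Walk.nil
  | (k+1), i, h =>
      (toRoot n u hn hu k (i / n)
        ((Nat.div_lt_iff_lt_mul hn).mpr (by rwa [sz_succ] at h))).concat
        (by rw [G_adj, adj_some_some]; exact Or.inr (Or.inl ⟨rfl, rfl⟩))

lemma toRoot_length (n u : ℕ) (hn : 1 ≤ n) (hu : u < 2 * n) :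
    ∀ (k i : ℕ) (h : i < sz n k), (toRoot n u hn hu k i h).length = k + 1
  | 0, i, h => by simp [toRoot]
  | (k+1), i, h => by
    simp [toRoot, SimpleGraph.Walk.length_concat, toRoot_length n u hn hu k]

lemma reach_root {n u : ℕ} (hn : 1 ≤ n) (hu : u < 2 * n) (v : Vtx n) : (G n u hn hu).Reachable none v := by
  cases v with
  | none => exact SimpleGraph.Reachable.refl _
  | some p =>
    obtain ⟨⟨k, i⟩, h⟩ := p
    exact ⟨toRoot n u hn hu k i h⟩

lemma G_connected {n u : ℕ} (hn : 1 ≤ n) (hu : u < 2 * n) : (G n u hn hu).Connected := by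
  rw [SimpleGraph.connected_iff]
  refine ⟨fun x y => ((reach_root hn hu x).symm.trans (reach_root hn hu y)), ⟨none⟩⟩

lemma dist_lvl {n u : ℕ} (hn : 1 ≤ n) (hu : u < 2 * n) (v : Vtx n) : (G n u hn hu).dist none v = lvl v := by
  cases v with
  | none => simp [lvl, SimpleGraph.dist_self]
  | some p =>
    obtain ⟨⟨k, i⟩, h⟩ := p
    have hub : (G n u hn hu).dist none (some ⟨(k, i), h⟩) ≤ k + 1 := by
      have h2 := SimpleGraph.dist_le (toRoot n u hn hu k i h)
      rwa [toRoot_length] at h2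
    obtain ⟨w, hwl⟩ := (reach_root hn hu (some ⟨(k, i), h⟩)).exists_walk_length_eq_dist
    have hlb := walk_lvl (hn := hn) (hu := hu) w
    simp only [lvl] at hlb ⊢
    omega

lemma lvl_eq_zero {n : ℕ} {y : Vtx n} (h : lvl y = 0) : y = none := by
  cases y with
  | none => rfl
  | some p => simp [lvl] at h

lemma vtx_eq {n k i j : ℕ} {h1 : (k, i).2 < sz n (k, i).1} {h2 : (k, j).2 < sz n (k, j).1}
    (e : i = j) : (some ⟨(k, i), h1⟩ : Vtx n) = some ⟨(k, j), h2⟩ := by subst e; rfl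

lemma image_finset_ncard {β : Type*} (F : Finset ℕ) (g : ℕ → β) (hg : Set.InjOn g ↑F) :
    (g '' ↑F).Finite ∧ (g '' ↑F).ncard = F.card :=
  ⟨F.finite_toSet.image g, by rw [Set.ncard_image_of_injOn hg, Set.ncard_coe_finset]⟩

section
variable {n u : ℕ}

lemma omegaPlus_root (hn : 1 ≤ n) (hu : u < 2 * n) :
    omegaPlus (G n u hn hu) none none =
      (fun i => (some ⟨(0, i % sz n 0), Nat.mod_lt _ (sz_pos hn 0)⟩ : Vtx n)) ''
        ↑(Finset.range (2 * n)) := by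
  have hsz0 : sz n 0 = 2 * n := sz_zero n
  ext y
  simp only [omegaPlus, Set.mem_setOf_eq, Set.mem_image, Finset.coe_range, Set.mem_Iio]
  constructor
  · rintro ⟨hadj, hdist⟩
    match y with
    | none => exact absurd hadj (by rw [G_adj, adj_none_none]; exact not_false)
    | some ⟨⟨k, i⟩, h⟩ =>
      rw [G_adj, adj_none_some] at hadj
      simp only at hadj
      subst hadj
      have h' : i < sz n 0 := h
      refine ⟨i, by omega, ?_⟩
      exact vtx_eq (Nat.mod_eq_of_lt h')
  · rintro ⟨i, hi, rfl⟩
    constructor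
    · rw [G_adj, adj_none_some]
    · rw [dist_lvl hn hu, dist_lvl hn hu]
      rfl

lemma omegaMinus_root (hn : 1 ≤ n) (hu : u < 2 * n) :
    omegaMinus (G n u hn hu) none none = ∅ := by
  ext y
  simp only [omegaMinus, Set.mem_setOf_eq, Set.mem_empty_iff_false, iff_false, not_and]
  intro hadj
  rw [dist_lvl hn hu, dist_lvl hn hu]
  simp [lvl]

lemma omegaZero_root (hn : 1 ≤ n) (hu : u < 2 * n) :
    omegaZero (G n u hn hu) none none = ∅ := by
  ext y
  simp only [omegaZero, Set.mem_setOf_eq, Set.mem_empty_iff_false, iff_false, not_and]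
  intro hadj
  rw [dist_lvl hn hu, dist_lvl hn hu]
  intro hly
  have := lvl_eq_zero (by simpa [lvl] using hly)
  subst this
  rw [G_adj, adj_none_none] at hadj
  exact hadj

lemma child_lt (hn : 1 ≤ n) {k i r : ℕ} (h : i < sz n k) (hr : r < n) :
    n * i + r < sz n (k + 1) := by
  have e1 : n * (i + 1) = n * i + n := by ring
  have e2 : n * (i + 1) ≤ n * sz n k := Nat.mul_le_mul_left n h
  have e3 : sz n (k + 1) = n * sz n k := by rw [sz_succ]; ring
  omega

lemma omegaPlus_some (hn : 1 ≤ n) (hu : u < 2 * n) (k i : ℕ) (h : i < sz n k) :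
    omegaPlus (G n u hn hu) none (some ⟨(k, i), h⟩) =
      (fun r => (some ⟨(k + 1, (n * i + r) % sz n (k + 1)),
          Nat.mod_lt _ (sz_pos hn (k + 1))⟩ : Vtx n)) '' ↑(Finset.range n) := by
  ext y
  simp only [omegaPlus, Set.mem_setOf_eq, Set.mem_image, Finset.coe_range, Set.mem_Iio]
  constructor
  · rintro ⟨hadj, hdist⟩
    rw [dist_lvl hn hu, dist_lvl hn hu] at hdist
    match y with
    | none =>
      have h2 : (0 : ℕ) = (k + 1) + 1 := hdist
      omega
    | some ⟨⟨l, j⟩, hj⟩ =>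
      have h2 : l + 1 = (k + 1) + 1 := hdist
      have hl : l = k + 1 := by omega
      subst hl
      rw [G_adj, adj_some_some] at hadj
      simp only at hadj
      rcases hadj with ⟨hkl, -⟩ | ⟨-, hdiv⟩ | ⟨hkl, -⟩
      · omega
      · refine ⟨j % n, Nat.mod_lt _ hn, ?_⟩
        have hj2 : n * i + j % n = j := by
          rw [← hdiv]; exact Nat.div_add_mod j n
        have hj' : j < sz n (k + 1) := hj
        exact vtx_eq (by rw [hj2]; exact Nat.mod_eq_of_lt hj')
      · omega
  · rintro ⟨r, hr, rfl⟩
    have hlt : n * i + r < sz n (k + 1) := child_lt hn h hr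
    have hmod : (n * i + r) % sz n (k + 1) = n * i + r := Nat.mod_eq_of_lt hlt
    constructor
    · rw [G_adj, adj_some_some]
      refine Or.inr (Or.inl ⟨rfl, ?_⟩)
      simp [hmod, Nat.mul_add_div hn, Nat.div_eq_of_lt hr]
    · rw [dist_lvl hn hu, dist_lvl hn hu]
      rfl

lemma omegaZero_some (hn : 1 ≤ n) (hu : u < 2 * n) (k i : ℕ) (h : i < sz n k) :
    omegaZero (G n u hn hu) none (some ⟨(k, i), h⟩) =
      (fun d => (some ⟨(k, (i + d) % sz n k),
          Nat.mod_lt _ (sz_pos hn k)⟩ : Vtx n)) '' ↑(D u (sz n k)) := by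
  ext y
  simp only [omegaZero, Set.mem_setOf_eq, Set.mem_image, Finset.mem_coe]
  constructor
  · rintro ⟨hadj, hdist⟩
    rw [dist_lvl hn hu, dist_lvl hn hu] at hdist
    match y with
    | none =>
      have h2 : (0 : ℕ) = k + 1 := hdist
      omega
    | some ⟨⟨l, j⟩, hj⟩ =>
      have h2 : l + 1 = k + 1 := hdist
      have hl : l = k := by omega
      subst hl
      rw [G_adj, adj_some_some] at hadj
      simp only at hadj
      rcases hadj with ⟨-, d, hd, hq⟩ | ⟨hkl, -⟩ | ⟨hkl, -⟩
      · exact ⟨d, hd, vtx_eq hq.symm⟩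
      · omega
      · omega
  · rintro ⟨d, hd, rfl⟩
    constructor
    · rw [G_adj, adj_some_some]
      exact Or.inl ⟨rfl, d, hd, rfl⟩
    · rw [dist_lvl hn hu, dist_lvl hn hu]
      rfl

lemma omegaMinus_some_zero (hn : 1 ≤ n) (hu : u < 2 * n) (i : ℕ) (h : i < sz n 0) :
    omegaMinus (G n u hn hu) none (some ⟨(0, i), h⟩) = {(none : Vtx n)} := by
  ext y
  simp only [omegaMinus, Set.mem_setOf_eq, Set.mem_singleton_iff]
  constructor
  · rintro ⟨hadj, hdist⟩
    rw [dist_lvl hn hu, dist_lvl hn hu] at hdist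
    have h2 : lvl y + 1 = 0 + 1 := hdist
    exact lvl_eq_zero (by omega)
  · rintro rfl
    constructor
    · rw [G_adj]; exact (adj_some_none _).mpr rfl
    · rw [dist_lvl hn hu, dist_lvl hn hu]
      rfl

lemma omegaMinus_some_succ (hn : 1 ≤ n) (hu : u < 2 * n) (k i : ℕ) (h : i < sz n (k + 1)) :
    omegaMinus (G n u hn hu) none (some ⟨(k + 1, i), h⟩) =
      {(some ⟨(k, i / n), (Nat.div_lt_iff_lt_mul hn).mpr (by rwa [sz_succ] at h)⟩ : Vtx n)} := by
  ext y
  simp only [omegaMinus, Set.mem_setOf_eq, Set.mem_singleton_iff]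
  constructor
  · rintro ⟨hadj, hdist⟩
    rw [dist_lvl hn hu, dist_lvl hn hu] at hdist
    match y with
    | none =>
      rw [G_adj, adj_some_none] at hadj
      exact absurd hadj (Nat.succ_ne_zero k)
    | some ⟨⟨l, j⟩, hj⟩ =>
      have h2 : l + 1 + 1 = (k + 1) + 1 := hdist
      have hl : l = k := by omega
      subst hl
      rw [G_adj, adj_some_some] at hadj
      simp only at hadj
      rcases hadj with ⟨hkl, -⟩ | ⟨hkl, -⟩ | ⟨-, hdiv⟩
      · omega
      · omega
      · exact vtx_eq hdiv.symm
  · rintro rfl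
    constructor
    · rw [G_adj, adj_some_some]
      exact Or.inr (Or.inr ⟨rfl, rfl⟩)
    · rw [dist_lvl hn hu, dist_lvl hn hu]
      rfl

end


lemma vtx_inj {n k i j : ℕ} {h1 : (k, i).2 < sz n (k, i).1} {h2 : (k, j).2 < sz n (k, j).1}
    (e : (some ⟨(k, i), h1⟩ : Vtx n) = some ⟨(k, j), h2⟩) : i = j := by
  have h3 := Option.some_injective _ e
  exact congrArg (fun q => q.1.2) h3

section
variable {n u : ℕ}

lemma spider_exists (hn : 1 ≤ n) (hu : u < 2 * n) :
    IsSpidernet (G n u hn hu) none (2 * n) (n + 1 + u) n := by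
  refine ⟨G_connected hn hu, by omega, by omega, hn, by omega, ?_,
    omegaMinus_root hn hu, omegaZero_root hn hu, ?_⟩
  · rw [omegaPlus_root hn hu]
    have hinj : Set.InjOn
        (fun i => (some ⟨(0, i % sz n 0), Nat.mod_lt _ (sz_pos hn 0)⟩ : Vtx n))
        ↑(Finset.range (2 * n)) := by
      intro a ha b hb hab
      simp only [Finset.coe_range, Set.mem_Iio] at ha hb
      have hsz0 : sz n 0 = 2 * n := sz_zero n
      have h2 : a % sz n 0 = b % sz n 0 := vtx_inj hab
      rwa [Nat.mod_eq_of_lt (by omega), Nat.mod_eq_of_lt (by omega)] at h2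
    obtain ⟨hf, hc⟩ := image_finset_ncard (Finset.range (2 * n)) _ hinj
    exact ⟨hf, by rw [hc, Finset.card_range]⟩
  · intro x hxo
    match x with
    | none => exact absurd rfl hxo
    | some ⟨⟨k, i⟩, h⟩ =>
      refine ⟨?_, ?_, ?_⟩
      · rw [omegaPlus_some hn hu k i h]
        have hinj : Set.InjOn
            (fun r => (some ⟨(k + 1, (n * i + r) % sz n (k + 1)),
                Nat.mod_lt _ (sz_pos hn (k + 1))⟩ : Vtx n)) ↑(Finset.range n) := by
          intro a ha b hb hab
          simp only [Finset.coe_range, Set.mem_Iio] at ha hb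
          have h2 := vtx_inj hab
          rw [Nat.mod_eq_of_lt (child_lt hn h ha), Nat.mod_eq_of_lt (child_lt hn h hb)] at h2
          omega
        obtain ⟨hf, hc⟩ := image_finset_ncard (Finset.range n) _ hinj
        exact ⟨hf, by rw [hc, Finset.card_range]⟩
      · match k, h with
        | 0, h =>
          rw [omegaMinus_some_zero hn hu i h]
          exact ⟨Set.finite_singleton _, Set.ncard_singleton _⟩
        | (k' + 1), h =>
          rw [omegaMinus_some_succ hn hu k' i h]
          exact ⟨Set.finite_singleton _, Set.ncard_singleton _⟩
      · rw [omegaZero_some hn hu k i h]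
        have hum := u_lt_sz hn hu k
        have hev := sz_even n k
        have hinj : Set.InjOn
            (fun d => (some ⟨(k, (i + d) % sz n k),
                Nat.mod_lt _ (sz_pos hn k)⟩ : Vtx n)) ↑(D u (sz n k)) := by
          intro a ha b hb hab
          simp only [Finset.mem_coe] at ha hb
          exact mod_inj (D_bounds hum hev ha).2 (D_bounds hum hev hb).2 (vtx_inj hab)
        obtain ⟨hf, hc⟩ := image_finset_ncard (D u (sz n k)) _ hinj
        refine ⟨hf, ?_⟩
        rw [hc, D_card hum hev]
        omega

end

end SpiderP

/-- A spidernet with data `(2n, n+1+u, n)` exists iff `0 ≤ u ≤ 2n - 1`: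
every spidernet with this data satisfies `u ≤ 2n - 1`, and conversely for
every `n ≥ 1` and `u ≤ 2n - 1` such a spidernet exists. -/
theorem spidernet_data_exists_iff :
    (∀ (V : Type) (G : SimpleGraph V) (o : V) (n u : ℕ), 1 ≤ n →
        IsSpidernet G o (2 * n) (n + 1 + u) n → u ≤ 2 * n - 1) ∧
    (∀ n u : ℕ, 1 ≤ n → u ≤ 2 * n - 1 →
        ∃ (V : Type) (G : SimpleGraph V) (o : V),
          IsSpidernet G o (2 * n) (n + 1 + u) n) := by
  constructor
  · intro V Gr o n u hn hsp
    obtain ⟨hconn, -, -, -, -, ⟨hSfin, hScard⟩, -, -, hx⟩ := hsp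
    have hne : (omegaPlus Gr o o).Nonempty := by
      rw [← Set.ncard_pos hSfin]
      omega
    obtain ⟨x, hxS⟩ := hne
    obtain ⟨hadj, hdx⟩ := id hxS
    have hxo : x ≠ o := by rintro rfl; exact Gr.irrefl hadj
    obtain ⟨-, -, h0fin, h0card⟩ := hx x hxo
    have hdx1 : Gr.dist o x = 1 := by
      rw [SimpleGraph.dist_self] at hdx; omega
    have hsub : omegaZero Gr o x ⊆ omegaPlus Gr o o \ {x} := by
      rintro y ⟨hady, hdy⟩
      have hdy1 : Gr.dist o y = 1 := by rw [hdy, hdx1]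
      refine ⟨⟨SimpleGraph.dist_eq_one_iff_adj.mp hdy1, ?_⟩, ?_⟩
      · rw [SimpleGraph.dist_self, hdy1]
      · simp only [Set.mem_singleton_iff]
        rintro rfl
        exact Gr.irrefl hady
    have hdiff : (omegaPlus Gr o o \ {x}).ncard = 2 * n - 1 := by
      rw [Set.ncard_diff_singleton_of_mem hxS, hScard]
    have hle := Set.ncard_le_ncard hsub hSfin.diff
    rw [h0card, hdiff] at hle
    omega
  · intro n u hn hu'
    have hu : u < 2 * n := by omega
    exact ⟨SpiderP.Vtx n, SpiderP.G n u hn hu, none, SpiderP.spider_exists hn hu⟩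
end

section
/- Piecewise-constant approximation of the multi-slit vector field: let λ₁,…,λ_N : [0,T] → [0,1] be continuous with Σ_k λ_k(t) = 1 for all t, and V₁,…,V_N : [0,T] → [0,M] continuous. For m ∈ ℕ, define a piecewise continuous U_m : [0,T] → [0,M] by partitioning [0,T] into m intervals of length T/m and, on each interval I_i with right endpoint t_i, successively setting U_m equal to V₁,…,V_N on consecutive subintervals of I_i whose lengths are proportional to λ₁(t_i),…,λ_N(t_i). Then for every t ∈ [0,T], ∫_0^t 1/(z − U_m(s)) ds → ∫_0^t Σ_{k=1}^N λ_k(s)/(z − V_k(s)) ds locally uniformly in z ∈ ℍ as m → ∞. -/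
/-!
On a cell of length `h = T/m` with right endpoint `tᵢ`, the driver `U_m` sits at `V_k` for a time
`h λ_k(tᵢ)`, so the cell integral of `1/(z - U_m)` is `h Σ_k λ_k(tᵢ)/(z - V_k(tᵢ))` up to
`O(h ω)`, where `ω` is a common modulus of continuity of the `λ_k` and `V_k` at scale `h`; the cell
integral of `Σ_k λ_k/(z - V_k)` is the same Riemann term up to `O(h ω)`. For `Im z ≥ δ` the kernel
`u ↦ 1/(z - u)` is bounded by `δ⁻¹` and `δ⁻²`-Lipschitz, so summing over the cells inside `[0, t]`
and bounding the last partial cell crudely gives an error `O(T ω + h)`, uniformly on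
`{Im z ≥ δ}`, which contains any compact subset of the upper half-plane.
-/

open MeasureTheory Complex intervalIntegral

/-- The piecewise-constant-switching driving function `U_m`: partition `[0,T]`
into `m` intervals `I_i` of length `T/m` with right endpoints `t_i = iT/m`;
on each `I_i`, set `U_m = V_k` successively on consecutive subintervals of
lengths proportional to `λ_1(t_i), …, λ_N(t_i)`. -/
noncomputable def switchDriver (N : ℕ) (hN : N ≠ 0) (T : ℝ)
    (lam : Fin N → ℝ → ℝ) (Vf : Fin N → ℝ → ℝ) (m : ℕ) (s : ℝ) : ℝ :=
  let i : ℕ := max (Nat.ceil (s * m / T)) 1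
  let ti : ℝ := i * T / m
  let r : ℝ := s - ((i : ℝ) - 1) * T / m
  let S : Finset (Fin N) := Finset.univ.filter
    (fun k => r ≤ T / m * ∑ j ∈ Finset.univ.filter (fun j => j ≤ k), lam j ti)
  Vf (if h : S.Nonempty then S.min' h else ⟨0, Nat.pos_of_ne_zero hN⟩) s

open Set Filter

lemma sub_ofReal_ne_zero {z : ℂ} (hz : 0 < z.im) (u : ℝ) : z - u ≠ 0 :=
  fun h => hz.ne' (by simpa using congrArg Complex.im h)

lemma norm_inv_sub_ofReal_le {z : ℂ} {δ : ℝ} (hδ : 0 < δ) (hz : δ ≤ z.im) (u : ℝ) :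
    ‖(z - u)⁻¹‖ ≤ δ⁻¹ := by
  rw [norm_inv]
  refine inv_anti₀ hδ (hz.trans ?_)
  simpa using (le_abs_self _).trans (z - u).abs_im_le_norm

lemma norm_inv_sub_ofReal_sub_inv_le {z : ℂ} {δ : ℝ} (hδ : 0 < δ) (hz : δ ≤ z.im) (u v : ℝ) :
    ‖(z - u)⁻¹ - (z - v)⁻¹‖ ≤ δ⁻¹ ^ 2 * |u - v| := by
  have hz' := hδ.trans_le hz
  calc ‖(z - u)⁻¹ - (z - v)⁻¹‖ = ‖(z - u)⁻¹‖ * ‖(z - v)⁻¹‖ * |u - v| := by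
        rw [inv_sub_inv (sub_ofReal_ne_zero hz' u) (sub_ofReal_ne_zero hz' v), div_eq_mul_inv,
          mul_inv, norm_mul, norm_mul, sub_sub_sub_cancel_left, ← ofReal_sub, norm_real,
          Real.norm_eq_abs]
        ring
    _ ≤ δ⁻¹ ^ 2 * |u - v| := by
        rw [sq]
        gcongr <;> exact norm_inv_sub_ofReal_le hδ hz _

lemma continuousOn_inv_sub_ofReal {f : ℝ → ℝ} {s : Set ℝ} (hf : ContinuousOn f s) {z : ℂ}
    (hz : 0 < z.im) : ContinuousOn (fun x => (z - f x)⁻¹) s :=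
  (continuousOn_const.sub (continuous_ofReal.comp_continuousOn hf)).inv₀ fun _ _ =>
    sub_ofReal_ne_zero hz _

lemma continuousOn_sum_ofReal_div_sub_ofReal {ι : Type*} [Fintype ι] {w u : ι → ℝ → ℝ}
    {s : Set ℝ} (hw : ∀ k, ContinuousOn (w k) s) (hu : ∀ k, ContinuousOn (u k) s) {z : ℂ}
    (hz : 0 < z.im) : ContinuousOn (fun x => ∑ k, (w k x : ℂ) / (z - u k x)) s :=
  continuousOn_finsetSum _ fun k _ => (continuous_ofReal.comp_continuousOn (hw k)).div
    (continuousOn_const.sub (continuous_ofReal.comp_continuousOn (hu k)))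
    fun _ _ => sub_ofReal_ne_zero hz _

lemma norm_sum_ofReal_div_sub_ofReal_le {ι : Type*} [Fintype ι] {w u : ι → ℝ} {z : ℂ} {δ : ℝ}
    (hδ : 0 < δ) (hz : δ ≤ z.im) (hw : ∀ k, 0 ≤ w k) (hw1 : ∑ k, w k = 1) :
    ‖∑ k, (w k : ℂ) / (z - u k)‖ ≤ δ⁻¹ :=
  calc ‖∑ k, (w k : ℂ) / (z - u k)‖ ≤ ∑ k, w k * δ⁻¹ :=
        (norm_sum_le _ _).trans <| Finset.sum_le_sum fun k _ => by
          rw [div_eq_mul_inv, norm_mul, norm_real, Real.norm_eq_abs, abs_of_nonneg (hw k)]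
          exact mul_le_mul_of_nonneg_left (norm_inv_sub_ofReal_le hδ hz _) (hw k)
    _ = δ⁻¹ := by rw [← Finset.sum_mul, hw1, one_mul]

lemma exists_pos_forall_dist_lt_of_isCompact {ι α β : Type*} [Finite ι] [PseudoMetricSpace α]
    [PseudoMetricSpace β] {s : Set α} (hs : IsCompact s) {f : ι → α → β}
    (hf : ∀ k, ContinuousOn (f k) s) {ε : ℝ} (hε : 0 < ε) :
    ∃ η > 0, ∀ x ∈ s, ∀ y ∈ s, dist x y < η → ∀ k, dist (f k x) (f k y) < ε := by
  have := Fintype.ofFinite ι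
  obtain ⟨η, hη, hmod⟩ := Metric.uniformContinuousOn_iff.1
    (hs.uniformContinuousOn_of_continuous (continuousOn_pi.2 hf)) ε hε
  exact ⟨η, hη, fun x hx y hy hxy => (dist_pi_lt_iff hε).1 (hmod x hx y hy hxy)⟩

lemma exists_pos_le_im_of_isCompact {K : Set ℂ} (hK : IsCompact K) (hKH : K ⊆ {z | 0 < z.im}) :
    ∃ δ > 0, ∀ z ∈ K, δ ≤ z.im := by
  rcases K.eq_empty_or_nonempty with rfl | hne
  · exact ⟨1, one_pos, by simp⟩
  obtain ⟨z₀, hz₀, hmin⟩ := hK.exists_isMinOn hne continuous_im.continuousOn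
  exact ⟨z₀.im, hKH hz₀, fun z hz => hmin hz⟩

section Integral

variable {E : Type*} [NormedAddCommGroup E] [NormedSpace ℝ E]

lemma norm_sum_smul_sub_sum_smul_le {ι : Type*} [Fintype ι] {lam w : ι → ℝ} {G g : ι → E}
    {εl εG B : ℝ} (hw : ∀ k, 0 ≤ w k) (hw1 : ∑ k, w k = 1) (hlam : ∀ k, |lam k - w k| ≤ εl)
    (hG : ∀ k, ‖G k‖ ≤ B) (hGg : ∀ k, ‖G k - g k‖ ≤ εG) :
    ‖∑ k, lam k • G k - ∑ k, w k • g k‖ ≤ Fintype.card ι * (εl * B) + εG := by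
  have hsplit : ∑ k, lam k • G k - ∑ k, w k • g k
      = ∑ k, ((lam k - w k) • G k + w k • (G k - g k)) := by
    rw [← Finset.sum_sub_distrib]
    congr 1 with k
    rw [sub_smul, smul_sub]
    abel
  calc ‖∑ k, lam k • G k - ∑ k, w k • g k‖ ≤ ∑ k, (εl * B + w k * εG) := by
        rw [hsplit]
        refine (norm_sum_le _ _).trans (Finset.sum_le_sum fun k _ => (norm_add_le _ _).trans ?_)
        rw [norm_smul, norm_smul, Real.norm_eq_abs, Real.norm_eq_abs, abs_of_nonneg (hw k)]
        gcongr
        · exact (abs_nonneg _).trans (hlam k)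
        · exact hlam k
        · exact hG k
        · exact hw k
        · exact hGg k
    _ = Fintype.card ι * (εl * B) + εG := by
        rw [Finset.sum_add_distrib, ← Finset.sum_mul _ w, hw1, Finset.sum_const, nsmul_eq_mul,
          Finset.card_univ]
        ring

lemma norm_integral_le_of_norm_integral_cells_le {f : ℝ → E} {h C B t : ℝ} (hh : 0 < h)
    (ht : 0 ≤ t) (hC : 0 ≤ C) (hB : 0 ≤ B) (hf : IntervalIntegrable f volume 0 t)
    (hcell : ∀ i : ℕ, (i + 1) * h ≤ t → ‖∫ s in i * h..(i + 1) * h, f s‖ ≤ h * C)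
    (hfB : ∀ s ∈ Ioc 0 t, ‖f s‖ ≤ B) :
    ‖∫ s in 0..t, f s‖ ≤ t * C + h * B := by
  set n := ⌊t / h⌋₊
  have hn : n * h ≤ t := (le_div_iff₀ hh).1 (Nat.floor_le (div_nonneg ht hh.le))
  have hn' : t < (n + 1) * h := (div_lt_iff₀ hh).1 (Nat.lt_floor_add_one _)
  have hsub : ∀ x ∈ Icc 0 t, ∀ y ∈ Icc 0 t, IntervalIntegrable f volume x y := fun x hx y hy =>
    hf.mono_set (by rw [uIcc_of_le ht]; exact uIcc_subset_Icc hx hy)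
  have hb : ∀ i ≤ n, (i : ℝ) * h ∈ Icc 0 t := fun i hi =>
    ⟨by positivity, (mul_le_mul_of_nonneg_right (by exact_mod_cast hi) hh.le).trans hn⟩
  have hmain : ‖∫ s in 0..n * h, f s‖ ≤ t * C := by
    have hsum := sum_integral_adjacent_intervals (a := fun i : ℕ => (i : ℝ) * h) (f := f)
      fun i hi => hsub _ (hb i hi.le) _ (hb (i + 1) hi)
    simp only [Nat.cast_zero, zero_mul, Nat.cast_succ] at hsum
    rw [← hsum]
    calc ‖∑ i ∈ Finset.range n, ∫ s in i * h..(i + 1) * h, f s‖ ≤ ∑ i ∈ Finset.range n, h * C :=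
          (norm_sum_le _ _).trans (Finset.sum_le_sum fun i hi =>
            hcell i (by exact_mod_cast (hb (i + 1) (Finset.mem_range.1 hi)).2))
      _ ≤ t * C := by
          rw [Finset.sum_const, Finset.card_range, nsmul_eq_mul, ← mul_assoc]
          gcongr
  have htail : ‖∫ s in n * h..t, f s‖ ≤ h * B := by
    refine (norm_integral_le_of_norm_le_const fun s hs => hfB s ?_).trans ?_
    · rw [uIoc_of_le hn] at hs
      exact ⟨(by positivity : (0 : ℝ) ≤ n * h).trans_lt hs.1, hs.2⟩
    · rw [abs_of_nonneg (sub_nonneg.2 hn), mul_comm]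
      gcongr
      linarith
  rw [← integral_add_adjacent_intervals (hsub 0 ⟨le_rfl, ht⟩ _ ⟨by positivity, hn⟩)
    (hsub _ ⟨by positivity, hn⟩ t ⟨ht, le_rfl⟩)]
  exact (norm_add_le _ _).trans (add_le_add hmain htail)

variable [CompleteSpace E]

lemma norm_integral_sub_smul_le {F : ℝ → E} {x y : ℝ} (hxy : x ≤ y) {g : E} {ε : ℝ}
    (hF : IntervalIntegrable F volume x y) (hFg : ∀ s ∈ Ioc x y, ‖F s - g‖ ≤ ε) :
    ‖(∫ s in x..y, F s) - (y - x) • g‖ ≤ ε * (y - x) := by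
  rw [← intervalIntegral.integral_const, ← integral_sub hF intervalIntegrable_const,
    ← abs_of_nonneg (sub_nonneg.2 hxy)]
  exact norm_integral_le_of_norm_le_const fun s hs => hFg s (uIoc_of_le hxy ▸ hs)

lemma norm_integral_sub_sum_smul_le {N : ℕ} {c : ℕ → ℝ} (hc : Monotone c) {F : ℝ → E}
    {g : Fin N → E} {ε : ℝ} (hF : ∀ k : Fin N, IntervalIntegrable F volume (c k) (c (k + 1)))
    (hFg : ∀ k : Fin N, ∀ s ∈ Ioc (c k) (c (k + 1)), ‖F s - g k‖ ≤ ε) :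
    ‖(∫ s in c 0..c N, F s) - ∑ k : Fin N, (c (k + 1) - c k) • g k‖ ≤ ε * (c N - c 0) := by
  have hsplit : ∫ s in c 0..c N, F s = ∑ k : Fin N, ∫ s in c k..c (k + 1), F s := by
    rw [Fin.sum_univ_eq_sum_range (fun p => ∫ s in c p..c (p + 1), F s),
      sum_integral_adjacent_intervals fun p hp => hF ⟨p, hp⟩]
  have htel : ∑ k : Fin N, (c (k + 1) - c k) = c N - c 0 := by
    rw [Fin.sum_univ_eq_sum_range (fun p => c (p + 1) - c p), Finset.sum_range_sub]
  rw [hsplit, ← Finset.sum_sub_distrib, ← htel, Finset.mul_sum]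
  refine (norm_sum_le _ _).trans (Finset.sum_le_sum fun k _ => ?_)
  exact norm_integral_sub_smul_le (hc k.val.le_succ) (hF k) (hFg k)

lemma norm_integral_switching_sub_le {N : ℕ} {c : ℕ → ℝ} (hc : Monotone c) {w : Fin N → ℝ}
    (hw : ∀ k, 0 ≤ w k) (hw1 : ∑ k, w k = 1)
    (hcw : ∀ k : Fin N, c (k + 1) - c k = (c N - c 0) * w k)
    {F : ℝ → E} {G : Fin N → ℝ → E} {lam : Fin N → ℝ → ℝ} {τ εl εG B : ℝ}
    (hF : ∀ k : Fin N, IntervalIntegrable F volume (c k) (c (k + 1)))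
    (hFG : ∀ k : Fin N, EqOn F (G k) (Ioc (c k) (c (k + 1))))
    (hD : IntervalIntegrable (fun s => ∑ k, lam k s • G k s) volume (c 0) (c N))
    (hlam : ∀ k, ∀ s ∈ Icc (c 0) (c N), |lam k s - w k| ≤ εl)
    (hGB : ∀ k, ∀ s ∈ Icc (c 0) (c N), ‖G k s‖ ≤ B)
    (hGτ : ∀ k, ∀ s ∈ Icc (c 0) (c N), ‖G k s - G k τ‖ ≤ εG) :
    ‖∫ s in c 0..c N, (F s - ∑ k, lam k s • G k s)‖ ≤ (c N - c 0) * (N * (εl * B) + 2 * εG) := by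
  have hpiece : ∀ k : Fin N, Ioc (c k) (c (k + 1)) ⊆ Icc (c 0) (c N) := fun k s hs =>
    ⟨(hc (Nat.zero_le _)).trans hs.1.le, hs.2.trans (hc k.isLt)⟩
  have hF0N : IntervalIntegrable F volume (c 0) (c N) := .trans_iterate fun p hp => hF ⟨p, hp⟩
  -- Both integrals are compared with the Riemann sum frozen at `τ`.
  have hfrozen : ∑ k : Fin N, (c (k + 1) - c k) • G k τ = (c N - c 0) • ∑ k, w k • G k τ := by
    simp only [hcw, Finset.smul_sum, mul_smul]
  have hFpart := norm_integral_sub_sum_smul_le hc hF (g := fun k => G k τ) (ε := εG)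
    fun k s hs => hFG k hs ▸ hGτ k s (hpiece k hs)
  have hDpart : ‖(∫ s in c 0..c N, ∑ k, lam k s • G k s) - (c N - c 0) • ∑ k, w k • G k τ‖
      ≤ (N * (εl * B) + εG) * (c N - c 0) := by
    refine norm_integral_sub_smul_le (hc (Nat.zero_le N)) hD fun s hs => ?_
    simpa using norm_sum_smul_sub_sum_smul_le hw hw1 (fun k => hlam k s (Ioc_subset_Icc_self hs))
      (fun k => hGB k s (Ioc_subset_Icc_self hs)) (fun k => hGτ k s (Ioc_subset_Icc_self hs))
  rw [integral_sub hF0N hD, ← sub_sub_sub_cancel_right _ _ ((c N - c 0) • ∑ k, w k • G k τ),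
    ← hfrozen]
  refine (norm_sub_le _ _).trans ?_
  rw [hfrozen] at hFpart ⊢
  linarith

/-- Within the cell `[i T/m, (i+1) T/m]` (cells counted from `i = 0`), `switchDriver` equals
`V_k` between `switchTime N T lam m i k` and `switchTime N T lam m i (k + 1)`. -/
noncomputable def switchTime (N : ℕ) (T : ℝ) (lam : Fin N → ℝ → ℝ) (m i p : ℕ) : ℝ :=
  i * T / m + T / m * ∑ j ∈ Finset.univ.filter (fun j : Fin N => (j : ℕ) < p),
    lam j ((i + 1) * T / m)

section SwitchDriver

variable {N : ℕ} {T : ℝ} {lam Vf : Fin N → ℝ → ℝ} {m i : ℕ}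

lemma switchTime_zero : switchTime N T lam m i 0 = i * T / m := by
  simp [switchTime]

lemma switchTime_succ (k : Fin N) : switchTime N T lam m i (k + 1) =
    i * T / m + T / m * ∑ j ∈ Finset.univ.filter (· ≤ k), lam j ((i + 1) * T / m) := by
  simp only [switchTime, Nat.lt_succ_iff, Fin.le_def]

lemma switchTime_succ_sub (k : Fin N) :
    switchTime N T lam m i (k + 1) - switchTime N T lam m i k
      = T / m * lam k ((i + 1) * T / m) := by
  have : Finset.univ.filter (fun j : Fin N => (j : ℕ) < k + 1)
      = insert k (Finset.univ.filter (fun j : Fin N => (j : ℕ) < k)) := by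
    ext j
    simp only [Finset.mem_filter, Finset.mem_univ, true_and, Finset.mem_insert, Fin.ext_iff]
    omega
  rw [switchTime, switchTime, this, Finset.sum_insert (by simp)]
  ring

lemma switchTime_self (hsum : ∑ j, lam j ((i + 1) * T / m) = 1) :
    switchTime N T lam m i N = (i + 1) * T / m := by
  simp only [switchTime, Fin.is_lt, Finset.filter_true, hsum]
  ring

lemma switchTime_mono (hT : 0 ≤ T) (hlam : ∀ j, 0 ≤ lam j ((i + 1) * T / m)) :
    Monotone (switchTime N T lam m i) := fun p q hpq => by
  unfold switchTime
  gcongr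
  exact fun j _ _ => hlam j

lemma ceil_eq_of_mem_cell {s : ℝ} (hT : 0 < T) (hm : 0 < m)
    (hs : s ∈ Ioc (i * T / m) ((i + 1) * T / m)) : max ⌈s * m / T⌉₊ 1 = i + 1 := by
  have hm' : (0 : ℝ) < m := by exact_mod_cast hm
  have hceil : ⌈s * m / T⌉₊ = i + 1 := by
    rw [Nat.ceil_eq_iff i.succ_ne_zero, Nat.succ_sub_one, lt_div_iff₀ hT, div_le_iff₀ hT]
    obtain ⟨h₁, h₂⟩ := hs
    rw [div_lt_iff₀ hm'] at h₁
    rw [le_div_iff₀ hm'] at h₂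
    push_cast
    exact ⟨h₁, h₂⟩
  omega

lemma eqOn_switchDriver (hN : N ≠ 0) (hT : 0 < T) (hm : 0 < m)
    (hlam : ∀ j, 0 ≤ lam j ((i + 1) * T / m)) (hsum : ∑ j, lam j ((i + 1) * T / m) = 1)
    (k : Fin N) :
    EqOn (switchDriver N hN T lam Vf m) (Vf k)
      (Ioc (switchTime N T lam m i k) (switchTime N T lam m i (k + 1))) := by
  intro s hs
  have hmono := switchTime_mono hT.le hlam
  have hcell : s ∈ Ioc (i * T / m) ((i + 1) * T / m) :=
    ⟨(switchTime_zero (lam := lam) ▸ hmono (Nat.zero_le k)).trans_lt hs.1,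
      hs.2.trans (switchTime_self hsum ▸ hmono k.isLt)⟩
  have hmem : ∀ j : Fin N, s - i * T / m
      ≤ T / m * ∑ l ∈ Finset.univ.filter (· ≤ j), lam l ((i + 1) * T / m)
      ↔ s ≤ switchTime N T lam m i (j + 1) := fun j => by
    rw [switchTime_succ]; constructor <;> intro h <;> linarith
  simp only [switchDriver, ceil_eq_of_mem_cell hT hm hcell]
  push_cast [add_sub_cancel_right]
  simp only [hmem]
  have hk : k ∈ Finset.univ.filter fun j : Fin N => s ≤ switchTime N T lam m i (j + 1) := by
    simpa using hs.2
  rw [dif_pos ⟨k, hk⟩]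
  congr 1
  refine le_antisymm (Finset.min'_le _ k hk) (Finset.le_min' _ _ k fun j hj => ?_)
  by_contra! hjk
  have hsj : s ≤ switchTime N T lam m i (j + 1) := (Finset.mem_filter.1 hj).2
  exact (hsj.trans (hmono (Nat.succ_le_of_lt hjk))).not_gt hs.1

lemma cell_subset_Icc (hT : 0 ≤ T) (hi : i + 1 ≤ m) :
    Icc (i * T / m : ℝ) ((i + 1) * T / m) ⊆ Icc 0 T := by
  have hm : (0 : ℝ) < m := by exact_mod_cast (Nat.succ_pos i).trans_le hi
  refine Icc_subset_Icc (by positivity) ((div_le_iff₀ hm).2 ?_)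
  rw [mul_comm]
  gcongr
  exact_mod_cast hi

lemma succ_mul_div_mem_Icc (hT : 0 ≤ T) (hi : i + 1 ≤ m) : ((i + 1) * T / m : ℝ) ∈ Icc 0 T :=
  cell_subset_Icc hT hi (right_mem_Icc.2 (by gcongr; linarith))

lemma dist_right_le_of_mem_cell {s : ℝ} (hs : s ∈ Icc (i * T / m : ℝ) ((i + 1) * T / m)) :
    dist s ((i + 1) * T / m) ≤ T / m := by
  rw [Real.dist_eq, abs_sub_comm, abs_of_nonneg (sub_nonneg.2 hs.2)]
  have : ((i : ℝ) + 1) * T / m = i * T / m + T / m := by ring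
  linarith [hs.1]

lemma Icc_switchTime_subset (hT : 0 < T)
    (hcell : Icc (i * T / m : ℝ) ((i + 1) * T / m) ⊆ Icc 0 T)
    (hlam : ∀ j, 0 ≤ lam j ((i + 1) * T / m)) (hsum : ∑ j, lam j ((i + 1) * T / m) = 1)
    (k : Fin N) :
    Icc (switchTime N T lam m i k) (switchTime N T lam m i (k + 1)) ⊆ Icc 0 T := by
  have hmono := switchTime_mono hT.le hlam
  refine (Icc_subset_Icc ?_ ?_).trans hcell
  · exact switchTime_zero (lam := lam) ▸ hmono (Nat.zero_le _)
  · exact switchTime_self hsum ▸ hmono k.isLt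

lemma intervalIntegrable_inv_sub_switchDriver_piece (hN : N ≠ 0) (hT : 0 < T) (hm : 0 < m)
    (hcell : Icc (i * T / m : ℝ) ((i + 1) * T / m) ⊆ Icc 0 T)
    (hlam : ∀ j, 0 ≤ lam j ((i + 1) * T / m)) (hsum : ∑ j, lam j ((i + 1) * T / m) = 1)
    (hV_cont : ∀ k, ContinuousOn (Vf k) (Icc 0 T)) {z : ℂ} (hz : 0 < z.im) (k : Fin N) :
    IntervalIntegrable (fun s => (z - switchDriver N hN T lam Vf m s)⁻¹) volume
      (switchTime N T lam m i k) (switchTime N T lam m i (k + 1)) := by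
  have hle := switchTime_mono hT.le hlam k.val.le_succ
  have hG : IntervalIntegrable (fun s => (z - Vf k s)⁻¹) volume
      (switchTime N T lam m i k) (switchTime N T lam m i (k + 1)) :=
    ((continuousOn_inv_sub_ofReal (hV_cont k) hz).mono
      (uIcc_of_le hle ▸ Icc_switchTime_subset hT hcell hlam hsum k)).intervalIntegrable
  refine hG.congr fun s hs => ?_
  rw [uIoc_of_le hle] at hs
  simp only [eqOn_switchDriver hN hT hm hlam hsum k hs]

lemma intervalIntegrable_inv_sub_switchDriver_cell (hN : N ≠ 0) (hT : 0 < T) (hm : 0 < m)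
    (hcell : Icc (i * T / m : ℝ) ((i + 1) * T / m) ⊆ Icc 0 T)
    (hlam : ∀ j, 0 ≤ lam j ((i + 1) * T / m)) (hsum : ∑ j, lam j ((i + 1) * T / m) = 1)
    (hV_cont : ∀ k, ContinuousOn (Vf k) (Icc 0 T)) {z : ℂ} (hz : 0 < z.im) :
    IntervalIntegrable (fun s => (z - switchDriver N hN T lam Vf m s)⁻¹) volume
      (i * T / m) ((i + 1) * T / m) := by
  rw [← switchTime_zero (N := N) (lam := lam), ← switchTime_self hsum]
  exact .trans_iterate fun p hp =>
    intervalIntegrable_inv_sub_switchDriver_piece hN hT hm hcell hlam hsum hV_cont hz ⟨p, hp⟩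

lemma norm_integral_inv_sub_switchDriver_cell_sub_le (hN : N ≠ 0) (hT : 0 < T) (hm : 0 < m)
    (hcell : Icc (i * T / m : ℝ) ((i + 1) * T / m) ⊆ Icc 0 T)
    (hlam : ∀ j, 0 ≤ lam j ((i + 1) * T / m)) (hsum : ∑ j, lam j ((i + 1) * T / m) = 1)
    (hlam_cont : ∀ k, ContinuousOn (lam k) (Icc 0 T))
    (hV_cont : ∀ k, ContinuousOn (Vf k) (Icc 0 T)) {z : ℂ} {δ ε : ℝ} (hδ : 0 < δ) (hz : δ ≤ z.im)
    (hlam_osc : ∀ k, ∀ s ∈ Icc (i * T / m : ℝ) ((i + 1) * T / m),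
      dist (lam k s) (lam k ((i + 1) * T / m)) ≤ ε)
    (hV_osc : ∀ k, ∀ s ∈ Icc (i * T / m : ℝ) ((i + 1) * T / m),
      dist (Vf k s) (Vf k ((i + 1) * T / m)) ≤ ε) :
    ‖∫ s in i * T / m..(i + 1) * T / m,
        ((z - switchDriver N hN T lam Vf m s)⁻¹ - ∑ k, (lam k s : ℂ) / (z - Vf k s))‖
      ≤ T / m * (ε * (N * δ⁻¹ + 2 * δ⁻¹ ^ 2)) := by
  have hz' := hδ.trans_le hz
  have h0 : switchTime N T lam m i 0 = i * T / m := switchTime_zero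
  have hN' : switchTime N T lam m i N = (i + 1) * T / m := switchTime_self hsum
  have hlen : switchTime N T lam m i N - switchTime N T lam m i 0 = T / m := by
    rw [h0, hN']; ring
  have hsmul : ∀ s, ∑ k, (lam k s : ℂ) / (z - Vf k s) = ∑ k, lam k s • (z - Vf k s)⁻¹ :=
    fun s => by simp only [div_eq_mul_inv, real_smul]
  have hD := continuousOn_sum_ofReal_div_sub_ofReal hlam_cont hV_cont hz'
  have hmono := switchTime_mono hT.le hlam
  have hcell' : Icc (switchTime N T lam m i 0) (switchTime N T lam m i N) ⊆ Icc 0 T := by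
    rwa [h0, hN']
  simp_rw [hsmul] at hD ⊢
  rw [← h0, ← hN']
  have := norm_integral_switching_sub_le hmono hlam hsum
    (fun k => by rw [switchTime_succ_sub, hlen])
    (fun k => intervalIntegrable_inv_sub_switchDriver_piece hN hT hm hcell hlam hsum hV_cont hz' k)
    (G := fun k s => (z - Vf k s)⁻¹)
    (fun k s hs => by simp only [eqOn_switchDriver hN hT hm hlam hsum k hs])
    (hD.mono (uIcc_of_le (hmono (Nat.zero_le N)) ▸ hcell')).intervalIntegrable
    (fun k s hs => Real.dist_eq _ _ ▸ hlam_osc k s (h0 ▸ hN' ▸ hs))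
    (fun k s _ => norm_inv_sub_ofReal_le hδ hz _)
    (fun k s hs => (norm_inv_sub_ofReal_sub_inv_le hδ hz _ _).trans
      (mul_le_mul_of_nonneg_left (Real.dist_eq _ _ ▸ hV_osc k s (h0 ▸ hN' ▸ hs)) (by positivity)))
  rw [hlen] at this
  convert this using 2
  ring

lemma intervalIntegrable_inv_sub_switchDriver (hN : N ≠ 0) (hT : 0 < T) (hm : 0 < m)
    (hlam_nonneg : ∀ k, ∀ s ∈ Icc 0 T, 0 ≤ lam k s) (hlam_sum : ∀ s ∈ Icc 0 T, ∑ k, lam k s = 1)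
    (hV_cont : ∀ k, ContinuousOn (Vf k) (Icc 0 T)) {z : ℂ} (hz : 0 < z.im) :
    IntervalIntegrable (fun s => (z - switchDriver N hN T lam Vf m s)⁻¹) volume 0 T := by
  have := IntervalIntegrable.trans_iterate (a := fun i : ℕ => i * T / m) (n := m) fun i hi => by
    have hti := succ_mul_div_mem_Icc hT.le hi
    push_cast
    exact intervalIntegrable_inv_sub_switchDriver_cell hN hT hm (cell_subset_Icc hT.le hi)
      (fun j => hlam_nonneg j _ hti) (hlam_sum _ hti) hV_cont hz
  simpa [(Nat.cast_pos.2 hm).ne'] using this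

lemma norm_integral_inv_sub_switchDriver_sub_le (hN : N ≠ 0) (hT : 0 < T) (hm : 0 < m)
    (hlam_cont : ∀ k, ContinuousOn (lam k) (Icc 0 T))
    (hlam_nonneg : ∀ k, ∀ s ∈ Icc 0 T, 0 ≤ lam k s) (hlam_sum : ∀ s ∈ Icc 0 T, ∑ k, lam k s = 1)
    (hV_cont : ∀ k, ContinuousOn (Vf k) (Icc 0 T)) {z : ℂ} {δ ε : ℝ} (hδ : 0 < δ) (hz : δ ≤ z.im)
    (hε : 0 ≤ ε)
    (hlam_mod : ∀ k, ∀ x ∈ Icc 0 T, ∀ y ∈ Icc 0 T, dist x y ≤ T / m → dist (lam k x) (lam k y) ≤ ε)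
    (hV_mod : ∀ k, ∀ x ∈ Icc 0 T, ∀ y ∈ Icc 0 T, dist x y ≤ T / m → dist (Vf k x) (Vf k y) ≤ ε)
    {t : ℝ} (ht : t ∈ Icc 0 T) :
    ‖(∫ s in 0..t, (z - switchDriver N hN T lam Vf m s)⁻¹)
        - ∫ s in 0..t, ∑ k, (lam k s : ℂ) / (z - Vf k s)‖
      ≤ t * (ε * (N * δ⁻¹ + 2 * δ⁻¹ ^ 2)) + T / m * (2 * δ⁻¹) := by
  have hz' := hδ.trans_le hz
  have hm' : (0 : ℝ) < m := by exact_mod_cast hm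
  have hF := intervalIntegrable_inv_sub_switchDriver hN hT hm hlam_nonneg hlam_sum hV_cont hz'
  have hD := continuousOn_sum_ofReal_div_sub_ofReal hlam_cont hV_cont hz'
  have h0t : uIcc 0 t ⊆ Icc 0 T := uIcc_subset_Icc (left_mem_Icc.2 hT.le) ht
  have hF0t := hF.mono_set (uIcc_of_le hT.le ▸ h0t)
  have hD0t := (hD.mono h0t).intervalIntegrable (μ := volume)
  rw [← integral_sub hF0t hD0t]
  refine norm_integral_le_of_norm_integral_cells_le (by positivity) ht.1 (by positivity)
    (by positivity) (hF0t.sub hD0t) (fun i hi => ?_) fun s hs => ?_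
  · have hi' : i + 1 ≤ m := by
      have h : ((i : ℝ) + 1) * (T / m) ≤ m * (T / m) := by
        rw [mul_div_cancel₀ _ hm'.ne']; linarith [ht.2]
      exact_mod_cast le_of_mul_le_mul_right h (by positivity)
    have hti := succ_mul_div_mem_Icc hT.le hi'
    simp only [← mul_div_assoc]
    exact norm_integral_inv_sub_switchDriver_cell_sub_le hN hT hm (cell_subset_Icc hT.le hi')
      (fun j => hlam_nonneg j _ hti) (hlam_sum _ hti) hlam_cont hV_cont hδ hz
      (fun k s hs => hlam_mod k s (cell_subset_Icc hT.le hi' hs) _ hti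
        (dist_right_le_of_mem_cell hs))
      (fun k s hs => hV_mod k s (cell_subset_Icc hT.le hi' hs) _ hti
        (dist_right_le_of_mem_cell hs))
  · have hs' : s ∈ Icc 0 T := ⟨hs.1.le, hs.2.trans ht.2⟩
    calc ‖(z - switchDriver N hN T lam Vf m s)⁻¹ - ∑ k, (lam k s : ℂ) / (z - Vf k s)‖
        ≤ δ⁻¹ + δ⁻¹ := (norm_sub_le _ _).trans (add_le_add (norm_inv_sub_ofReal_le hδ hz _)
          (norm_sum_ofReal_div_sub_ofReal_le hδ hz (fun k => hlam_nonneg k s hs') (hlam_sum s hs')))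
      _ = 2 * δ⁻¹ := by ring

end SwitchDriver

theorem multislit_piecewise_approximation_general
    (N : ℕ) (hN : N ≠ 0) (T : ℝ) (hT : 0 < T)
    (lam : Fin N → ℝ → ℝ) (Vf : Fin N → ℝ → ℝ)
    (hlam_cont : ∀ k, ContinuousOn (lam k) (Set.Icc 0 T))
    (hlam_mem : ∀ k, ∀ s ∈ Set.Icc (0 : ℝ) T, lam k s ∈ Set.Icc (0 : ℝ) 1)
    (hlam_sum : ∀ s ∈ Set.Icc (0 : ℝ) T, ∑ k, lam k s = 1)
    (hV_cont : ∀ k, ContinuousOn (Vf k) (Set.Icc 0 T)) :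
    ∀ t ∈ Set.Icc (0 : ℝ) T,
      TendstoLocallyUniformlyOn
        (fun (m : ℕ) (z : ℂ) =>
          ∫ s in (0 : ℝ)..t, ((z - (switchDriver N hN T lam Vf m s : ℝ))⁻¹ : ℂ))
        (fun z : ℂ =>
          ∫ s in (0 : ℝ)..t, ∑ k, ((lam k s : ℝ) : ℂ) / (z - (Vf k s : ℝ)))
        Filter.atTop {z : ℂ | 0 < z.im} := by
  intro t ht
  rw [tendstoLocallyUniformlyOn_iff_forall_isCompact (isOpen_lt continuous_const continuous_im)]
  intro K hKH hK
  obtain ⟨δ, hδ, hKδ⟩ := exists_pos_le_im_of_isCompact hK hKH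
  rw [Metric.tendstoUniformlyOn_iff]
  intro ε hε
  obtain ⟨ε', hε', hε'T⟩ := exists_pos_mul_lt (half_pos hε) (T * (N * δ⁻¹ + 2 * δ⁻¹ ^ 2))
  obtain ⟨η₁, hη₁, hlam_mod⟩ := exists_pos_forall_dist_lt_of_isCompact isCompact_Icc hlam_cont hε'
  obtain ⟨η₂, hη₂, hV_mod⟩ := exists_pos_forall_dist_lt_of_isCompact isCompact_Icc hV_cont hε'
  have hmesh := tendsto_const_div_atTop_nhds_zero_nat T
  filter_upwards [hmesh.eventually (gt_mem_nhds hη₁), hmesh.eventually (gt_mem_nhds hη₂),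
    (hmesh.mul_const (2 * δ⁻¹)).eventually
      (gt_mem_nhds (show 0 * (2 * δ⁻¹) < ε / 2 by simpa using half_pos hε)),
    eventually_gt_atTop 0] with m hm₁ hm₂ hmε hm z hz
  rw [dist_comm, dist_eq_norm]
  refine (norm_integral_inv_sub_switchDriver_sub_le hN hT hm hlam_cont
    (fun k s hs => (hlam_mem k s hs).1) hlam_sum hV_cont hδ (hKδ z hz) hε'.le
    (fun k x hx y hy hxy => (hlam_mod x hx y hy (hxy.trans_lt hm₁) k).le)
    (fun k x hx y hy hxy => (hV_mod x hx y hy (hxy.trans_lt hm₂) k).le) ht).trans_lt ?_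
  have ht' : t * (ε' * (N * δ⁻¹ + 2 * δ⁻¹ ^ 2)) ≤ T * (N * δ⁻¹ + 2 * δ⁻¹ ^ 2) * ε' := by
    rw [mul_comm ε', ← mul_assoc]
    gcongr
    exact ht.2
  linarith

/-- Piecewise-constant approximation of the multi-slit Herglotz vector field:
with `λ_k : [0,T] → [0,1]` continuous summing to `1` and `V_k : [0,T] → [0,M]`
continuous, for every `t ∈ [0,T]`,
`∫₀ᵗ 1/(z - U_m(s)) ds → ∫₀ᵗ Σ_k λ_k(s)/(z - V_k(s)) ds`
locally uniformly in `z ∈ ℍ` as `m → ∞`. -/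
theorem multislit_piecewise_approximation
    (N : ℕ) (hN : N ≠ 0) (T M : ℝ) (hT : 0 < T) (hM : 0 ≤ M)
    (lam : Fin N → ℝ → ℝ) (Vf : Fin N → ℝ → ℝ)
    (hlam_cont : ∀ k, ContinuousOn (lam k) (Set.Icc 0 T))
    (hlam_mem : ∀ k, ∀ s ∈ Set.Icc (0 : ℝ) T, lam k s ∈ Set.Icc (0 : ℝ) 1)
    (hlam_sum : ∀ s ∈ Set.Icc (0 : ℝ) T, ∑ k, lam k s = 1)
    (hV_cont : ∀ k, ContinuousOn (Vf k) (Set.Icc 0 T))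
    (hV_mem : ∀ k, ∀ s ∈ Set.Icc (0 : ℝ) T, Vf k s ∈ Set.Icc 0 M) :
    ∀ t ∈ Set.Icc (0 : ℝ) T,
      TendstoLocallyUniformlyOn
        (fun (m : ℕ) (z : ℂ) =>
          ∫ s in (0 : ℝ)..t, ((z - (switchDriver N hN T lam Vf m s : ℝ))⁻¹ : ℂ))
        (fun z : ℂ =>
          ∫ s in (0 : ℝ)..t, ∑ k, ((lam k s : ℝ) : ℂ) / (z - (Vf k s : ℝ)))
        Filter.atTop {z : ℂ | 0 < z.im} :=
  multislit_piecewise_approximation_general N hN T hT lam Vf hlam_cont hlam_mem hlam_sum hV_cont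
end Integral
end
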